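/- Fix uniform bids b_{ij} = α_i v_{ij} with multipliers α_i ≥ 1 and an allocation a valid under b, and let a^opt be the optimal allocation obtained by ranking all items in descending order of true value v_{ij}, breaking ties in favor of the item appearing earlier in a. Then for every k ∈ [K], Σ_i Σ_{(u,j) ∈ R_k(i)} b_{uj} ≥ Σ_{(i,j) ∈ S_k(a^opt) \ S_k(a)} b_{ij}, where R_k(i) := S_k(a_{-i}) \ S_k(a) is the set of replacement items entering the top k slots when bidder i is removed. -/

import Mathlib

/-!
Let `D = S_k(aopt) \ S_k(a)` and let `A_j` be bidder `j`'s items in `S_k(a)`. If `x ∈ D` belongs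
to `j`, every item of `A_j` is ranked before `x` by `a`, hence has at least `x`'s value, hence stays
in `S_k(aopt)`; so `|D| + |A_j| ≤ k`. By Hall's theorem, `D` can therefore be matched injectively
into `S_k(a)` so that no item is matched to an item of its own bidder. The items of `D` matched
into `A_i` are at most `|A_i|` items outside `S_k(a)` not owned by `i`, and removing `i` promotes
the best `|A_i|` such items into the top `k`: their bids are covered by `R_k(i)`.
-/

open Finset MeasureTheory

namespace SponsoredShopping

noncomputable section

/-- An item is a pair `(i, j)`: bidder `i`'s `j`-th item. -/
abbrev Item (n m : ℕ) : Type := Fin n × Fin m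

/-- An allocation assigns to each rank `k` (0-based) an item. -/
abbrev Alloc (n m : ℕ) : Type := Fin (n * m) ≃ Item n m

/-- Maximum of `f` over a finite set, with value `0` on the empty set. -/
def fmax {ι : Type*} (s : Finset ι) (f : ι → ℝ) : ℝ :=
  WithBot.unbotD 0 (s.sup fun i => (f i : WithBot ℝ))

variable {n m : ℕ}

/-- An allocation is valid under bids `b` if bids are nonincreasing along ranks. -/
def ValidUnder (b : Item n m → ℝ) (a : Alloc n m) : Prop :=
  ∀ k k' : Fin (n * m), k ≤ k' → b (a k') ≤ b (a k)

/-- The value of bidder `i` under allocation `a`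
(`c k` is the CTR of slot `k`, with `c k = 0` for `k ≥ K`). -/
def bidderValue (c : ℕ → ℝ) (v : Item n m → ℝ) (a : Alloc n m) (i : Fin n) : ℝ :=
  ∑ k : Fin (n * m), if (a k).1 = i then c k * v (a k) else 0

/-- Social welfare of an allocation. -/
def wel (c : ℕ → ℝ) (v : Item n m → ℝ) (a : Alloc n m) : ℝ :=
  ∑ k : Fin (n * m), c k * v (a k)

/-- Optimal social welfare. -/
def welOpt (c : ℕ → ℝ) (v : Item n m → ℝ) : ℝ :=
  fmax (univ : Finset (Alloc n m)) (wel c v)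

/-- GSP per-click price of the item ranked `k`: highest bid among lower-ranked
items belonging to other bidders (`0` if none). -/
def gspPrice (b : Item n m → ℝ) (a : Alloc n m) (k : Fin (n * m)) : ℝ :=
  fmax (univ.filter fun k' : Fin (n * m) => k < k' ∧ (a k').1 ≠ (a k).1)
    (fun k' => b (a k'))

/-- Total GSP payment of bidder `i`. -/
def gspPay (c : ℕ → ℝ) (b : Item n m → ℝ) (a : Alloc n m) (i : Fin n) : ℝ :=
  ∑ k : Fin (n * m), if (a k).1 = i then c k * gspPrice b a k else 0

/-- Bid-welfare of an allocation. -/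
def bidWelfare (c : ℕ → ℝ) (b : Item n m → ℝ) (a : Alloc n m) : ℝ :=
  ∑ k : Fin (n * m), c k * b (a k)

/-- Bids with bidder `i`'s bids zeroed out. -/
def exclBids (b : Item n m → ℝ) (i : Fin n) : Item n m → ℝ :=
  fun x => if x.1 = i then 0 else b x

/-- Bid-welfare obtained by bidders other than `i` in allocation `a`. -/
def othersWelfare (c : ℕ → ℝ) (b : Item n m → ℝ) (a : Alloc n m) (i : Fin n) : ℝ :=
  ∑ k : Fin (n * m), if (a k).1 ≠ i then c k * b (a k) else 0

/-- Optimal counterfactual bid-welfare without bidder `i`. -/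
def woptWithout (c : ℕ → ℝ) (b : Item n m → ℝ) (i : Fin n) : ℝ :=
  fmax (univ : Finset (Alloc n m)) (fun a' => bidWelfare c (exclBids b i) a')

/-- VCG payment of bidder `i`. -/
def vcgPay (c : ℕ → ℝ) (b : Item n m → ℝ) (a : Alloc n m) (i : Fin n) : ℝ :=
  woptWithout c b i - othersWelfare c b a i

/-- The two mechanisms considered. -/
inductive Mech | gsp | vcg

/-- Payment of bidder `i` under mechanism `M`. -/
def pay : Mech → (ℕ → ℝ) → (Item n m → ℝ) → Alloc n m → Fin n → ℝ
  | .gsp => gspPay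
  | .vcg => vcgPay

/-- `S_k(a)`: the set of items assigned to the first `k` slots in `a`. -/
def topk (a : Alloc n m) (k : ℕ) : Finset (Item n m) :=
  (univ.filter fun r : Fin (n * m) => (r : ℕ) < k).image a

lemma mem_topk {a : Alloc n m} {k : ℕ} {x : Item n m} :
    x ∈ topk a k ↔ (a.symm x : ℕ) < k := by
  simp only [topk, mem_image, mem_filter, mem_univ, true_and]
  constructor
  · rintro ⟨r, hr, rfl⟩
    simpa using hr
  · exact fun h => ⟨a.symm x, h, a.apply_symm_apply x⟩

lemma card_topk_eq (a a' : Alloc n m) (k : ℕ) : #(topk a k) = #(topk a' k) := by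
  rw [topk, topk, card_image_of_injective _ a.injective,
    card_image_of_injective _ a'.injective]

lemma ValidUnder.le_of_symm_le {b : Item n m → ℝ} {a : Alloc n m} (ha : ValidUnder b a)
    {x y : Item n m} (h : a.symm x ≤ a.symm y) : b y ≤ b x := by
  simpa using ha _ _ h

end

end SponsoredShopping

namespace Finset

lemma sum_le_sum_of_card_le_of_forall_le {ι : Type*} {s t : Finset ι} {f : ι → ℝ}
    (hcard : #s ≤ #t) (hf : ∀ y ∈ t, 0 ≤ f y) (hle : ∀ x ∈ s, ∀ y ∈ t, f x ≤ f y) :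
    ∑ x ∈ s, f x ≤ ∑ y ∈ t, f y := by
  obtain rfl | hs := s.eq_empty_or_nonempty
  · simpa using sum_nonneg hf
  have ht : t.Nonempty := card_pos.mp ((card_pos.mpr hs).trans_le hcard)
  obtain ⟨y₀, hy₀, hmin⟩ := exists_mem_eq_inf' ht f
  calc ∑ x ∈ s, f x ≤ #s • t.inf' ht f :=
        sum_le_card_nsmul s f _ fun x hx => le_inf' ht f (hle x hx)
    _ ≤ #t • t.inf' ht f := nsmul_le_nsmul_left (hmin ▸ hf y₀ hy₀) hcard
    _ ≤ ∑ y ∈ t, f y := card_nsmul_le_sum t f _ fun y hy => inf'_le f hy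

lemma sum_le_sum_of_card_le_of_sdiff_le {ι : Type*} [DecidableEq ι] {s t : Finset ι}
    {f : ι → ℝ} (hcard : #s ≤ #t) (hf : ∀ y ∈ t, 0 ≤ f y)
    (hle : ∀ x ∈ s \ t, ∀ y ∈ t \ s, f x ≤ f y) :
    ∑ x ∈ s, f x ≤ ∑ y ∈ t, f y := by
  have hcard' : #(s \ t) ≤ #(t \ s) := by
    have := card_sdiff_add_card_inter s t
    have := card_sdiff_add_card_inter t s
    rw [inter_comm] at this
    omega
  have hsdiff := sum_le_sum_of_card_le_of_forall_le hcard'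
    (fun y hy => hf y (mem_sdiff.mp hy).1) hle
  rw [← sum_inter_add_sum_sdiff s t, ← sum_inter_add_sum_sdiff t s, inter_comm]
  exact add_le_add le_rfl hsdiff

lemma exists_injective_owner_ne {ι β : Type*} [DecidableEq ι] [DecidableEq β]
    (D P : Finset ι) (o : ι → β) (hD : ∀ x ∈ D, #D ≤ #{p ∈ P | o p ≠ o x}) :
    ∃ f : D → ι, Function.Injective f ∧ ∀ x, f x ∈ P ∧ o (f x) ≠ o x := by
  let N : D → Finset ι := fun x => {p ∈ P | o p ≠ o x}
  suffices hall : ∀ S : Finset D, #S ≤ #(S.biUnion N) by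
    obtain ⟨f, hf, hfN⟩ := (all_card_le_biUnion_card_iff_exists_injective N).mp hall
    exact ⟨f, hf, fun x => mem_filter.mp (hfN x)⟩
  intro S
  obtain rfl | ⟨x₀, hx₀⟩ := S.eq_empty_or_nonempty
  · simp
  have hS : #S ≤ #(N x₀) :=
    (card_le_univ S).trans ((Fintype.card_coe D).trans_le (hD x₀ x₀.2))
  by_cases hsame : ∀ x ∈ S, o x.1 = o x₀.1
  · exact hS.trans (card_le_card (subset_biUnion_of_mem N hx₀))
  push Not at hsame
  obtain ⟨x₁, hx₁, hne⟩ := hsame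
  -- Two owners already make every element of `P` a neighbour of `S`.
  have hP : P ⊆ S.biUnion N := by
    intro p hp
    by_cases hp₀ : o p = o x₀.1
    · exact mem_biUnion.mpr ⟨x₁, hx₁, mem_filter.mpr ⟨hp, hp₀ ▸ hne.symm⟩⟩
    · exact mem_biUnion.mpr ⟨x₀, hx₀, mem_filter.mpr ⟨hp, hp₀⟩⟩
  exact hS.trans ((card_le_card (filter_subset _ P)).trans (card_le_card hP))

end Finset

namespace SponsoredShopping

open Finset

section

variable {n m : ℕ}

lemma sum_le_sum_replacements {b : Item n m → ℝ} (hb : ∀ x, 0 ≤ b x) {a am : Alloc n m}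
    (ha : ValidUnder b a) {i : Fin n}
    (hm1 : ∀ x y : Item n m, x.1 ≠ i → y.1 = i → am.symm x < am.symm y)
    (hm2 : ∀ x y : Item n m, x.1 ≠ i → y.1 ≠ i → (am.symm x ≤ am.symm y ↔ a.symm x ≤ a.symm y))
    {k : ℕ} {T : Finset (Item n m)} (hT : ∀ x ∈ T, x ∉ topk a k ∧ x.1 ≠ i)
    (hTcard : #T ≤ #{x ∈ topk a k | x.1 = i}) :
    ∑ x ∈ T, b x ≤ ∑ x ∈ topk am k \ topk a k, b x := by
  by_cases hfull : T ⊆ topk am k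
  · refine sum_le_sum_of_subset_of_nonneg (fun x hx => ?_) fun y _ _ => hb y
    exact mem_sdiff.mpr ⟨hfull hx, (hT x hx).1⟩
  obtain ⟨x₀, hx₀, hx₀am⟩ := not_subset.mp hfull
  -- `am` ranks all of `i`'s items after `x₀`, which misses the top `k`; so `i` is absent from
  -- `S_k(am)`, the replacements are at least as many as `i`'s items in `S_k(a)`, and they
  -- outrank every item of `T` that is left out.
  have hnoi : ∀ z ∈ topk am k, z.1 ≠ i := fun z hz hzi => by
    have := hm1 x₀ z (hT x₀ hx₀).2 hzi
    rw [mem_topk] at hz hx₀am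
    rw [Fin.lt_def] at this
    omega
  refine sum_le_sum_of_card_le_of_sdiff_le ?_ (fun y _ => hb y) fun x hx y hy => ?_
  · have hsub : {x ∈ topk a k | x.1 = i} ⊆ topk a k \ topk am k := fun z hz =>
      mem_sdiff.mpr ⟨(mem_filter.mp hz).1, fun hzam => hnoi z hzam (mem_filter.mp hz).2⟩
    rw [← card_sdiff_comm (card_topk_eq a am k)]
    exact hTcard.trans (card_le_card hsub)
  · obtain ⟨hxT, hxR⟩ := mem_sdiff.mp hx
    obtain ⟨hyR, -⟩ := mem_sdiff.mp hy
    obtain ⟨hxa, hxi⟩ := hT x hxT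
    obtain ⟨hyam, -⟩ := mem_sdiff.mp hyR
    have hxam : x ∉ topk am k := fun h => hxR (mem_sdiff.mpr ⟨h, hxa⟩)
    have hyx : am.symm y ≤ am.symm x := by
      rw [mem_topk] at hyam hxam
      rw [Fin.le_def]
      omega
    exact ha.le_of_symm_le ((hm2 y x (hnoi y hyam) hxi).mp hyx)

lemma symm_le_of_value_le {v : Item n m → ℝ} {a aopt : Alloc n m}
    (hsort : ∀ r r' : Fin (n * m), r ≤ r' → v (aopt r') ≤ v (aopt r))
    (htie : ∀ x y : Item n m, v x = v y → (aopt.symm x ≤ aopt.symm y ↔ a.symm x ≤ a.symm y))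
    {x y : Item n m} (hv : v y ≤ v x) (ha : a.symm x ≤ a.symm y) :
    aopt.symm x ≤ aopt.symm y := by
  by_contra! hlt
  have hvyx : v x ≤ v y := by simpa using hsort _ _ hlt.le
  exact hlt.not_ge ((htie x y (le_antisymm hvyx hv)).mpr ha)

lemma card_displaced_le {v : Item n m → ℝ} {α : Fin n → ℝ} (hα : ∀ i, 0 < α i)
    {a aopt : Alloc n m} (ha : ValidUnder (fun x => α x.1 * v x) a)
    (hsort : ∀ r r' : Fin (n * m), r ≤ r' → v (aopt r') ≤ v (aopt r))
    (htie : ∀ x y : Item n m, v x = v y → (aopt.symm x ≤ aopt.symm y ↔ a.symm x ≤ a.symm y))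
    {k : ℕ} {x : Item n m} (hx : x ∈ topk aopt k \ topk a k) :
    #(topk aopt k \ topk a k) ≤ #{z ∈ topk a k | z.1 ≠ x.1} := by
  obtain ⟨hxopt, hxa⟩ := mem_sdiff.mp hx
  -- Items of `x`'s owner ranked before `x` in `a` have at least its value (same multiplier),
  -- so the tie-breaking keeps them ahead of `x` in `aopt`.
  have hstay : {z ∈ topk a k | z.1 = x.1} ⊆ topk aopt k := by
    intro z hz
    obtain ⟨hza, hzx⟩ := mem_filter.mp hz
    have haz : a.symm z ≤ a.symm x := by
      rw [mem_topk] at hza hxa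
      rw [Fin.le_def]
      omega
    have hbid : α x.1 * v x ≤ α x.1 * v z := by simpa [hzx] using ha.le_of_symm_le haz
    have hopt := symm_le_of_value_le hsort htie (le_of_mul_le_mul_left hbid (hα x.1)) haz
    rw [mem_topk] at hxopt ⊢
    rw [Fin.le_def] at hopt
    omega
  have hdisj : Disjoint (topk aopt k \ topk a k) {z ∈ topk a k | z.1 = x.1} :=
    disjoint_sdiff_self_left.mono_right (filter_subset _ _)
  have hunion := card_le_card (union_subset (sdiff_subset : topk aopt k \ topk a k ⊆ _) hstay)
  rw [card_union_of_disjoint hdisj, card_topk_eq aopt a] at hunion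
  have hsplit := card_filter_add_card_filter_not (s := topk a k) (fun z => z.1 = x.1)
  simp only [← ne_eq] at hsplit
  omega

theorem replacement_bids_cover_displaced_bids_general
    (n m K : ℕ) (v : Item n m → ℝ)
    (hv : ∀ x : Item n m, 0 ≤ v x)
    (α : Fin n → ℝ) (hα : ∀ i, 1 ≤ α i)
    (a : Alloc n m) (ha : ValidUnder (fun x => α x.1 * v x) a)
    (aopt : Alloc n m)
    (hsort : ∀ r r' : Fin (n * m), r ≤ r' → v (aopt r') ≤ v (aopt r))
    (htie : ∀ x y : Item n m, v x = v y →
      (aopt.symm x ≤ aopt.symm y ↔ a.symm x ≤ a.symm y))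
    (aminus : Fin n → Alloc n m)
    (hmin1 : ∀ (i : Fin n) (x y : Item n m), x.1 ≠ i → y.1 = i →
      (aminus i).symm x < (aminus i).symm y)
    (hmin2 : ∀ (i : Fin n) (x y : Item n m), x.1 ≠ i → y.1 ≠ i →
      ((aminus i).symm x ≤ (aminus i).symm y ↔ a.symm x ≤ a.symm y)) :
    ∀ k : ℕ, k ≤ K →
      ∑ x ∈ topk aopt k \ topk a k, α x.1 * v x
        ≤ ∑ i : Fin n, ∑ x ∈ topk (aminus i) k \ topk a k, α x.1 * v x := by
  classical
  intro k _
  set D := topk aopt k \ topk a k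
  have hαpos : ∀ i, 0 < α i := fun i => one_pos.trans_le (hα i)
  have hb : ∀ x : Item n m, 0 ≤ α x.1 * v x := fun x => mul_nonneg (hαpos x.1).le (hv x)
  obtain ⟨f, hf_inj, hf⟩ := exists_injective_owner_ne D (topk a k) Prod.fst
    fun x hx => card_displaced_le hαpos ha hsort htie hx
  rw [← sum_attach, ← sum_fiberwise D.attach (fun x => (f x).1)]
  refine sum_le_sum fun j _ => ?_
  rw [← sum_image (f := fun x => α x.1 * v x) fun x _ y _ h => Subtype.ext h]
  refine sum_le_sum_replacements hb ha (hmin1 j) (hmin2 j) (fun x hx => ?_) ?_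
  · obtain ⟨x', hx', rfl⟩ := mem_image.mp hx
    exact ⟨(mem_sdiff.mp x'.2).2, fun h => (hf x').2 ((mem_filter.mp hx').2.trans h.symm)⟩
  · rw [card_image_of_injective _ Subtype.val_injective]
    refine card_le_card_of_injOn f (fun x hx => ?_) hf_inj.injOn
    exact mem_filter.mpr ⟨(hf x).1, (mem_filter.mp hx).2⟩

/-- The total bid of the replacement items dominates the total bid of the
displaced optimal items, for every prefix `k ≤ K`. -/
theorem replacement_bids_cover_displaced_bids
    (n m K : ℕ) (v : Item n m → ℝ)
    (hv : ∀ x : Item n m, 0 ≤ v x)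
    (hvmono : ∀ (i : Fin n) (j j' : Fin m), j ≤ j' → v (i, j') ≤ v (i, j))
    (α : Fin n → ℝ) (hα : ∀ i, 1 ≤ α i)
    (a : Alloc n m) (ha : ValidUnder (fun x => α x.1 * v x) a)
    (aopt : Alloc n m)
    (hsort : ∀ r r' : Fin (n * m), r ≤ r' → v (aopt r') ≤ v (aopt r))
    (htie : ∀ x y : Item n m, v x = v y →
      (aopt.symm x ≤ aopt.symm y ↔ a.symm x ≤ a.symm y))
    (aminus : Fin n → Alloc n m)
    (hmin1 : ∀ (i : Fin n) (x y : Item n m), x.1 ≠ i → y.1 = i →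
      (aminus i).symm x < (aminus i).symm y)
    (hmin2 : ∀ (i : Fin n) (x y : Item n m), x.1 ≠ i → y.1 ≠ i →
      ((aminus i).symm x ≤ (aminus i).symm y ↔ a.symm x ≤ a.symm y)) :
    ∀ k : ℕ, k ≤ K →
      ∑ x ∈ topk aopt k \ topk a k, α x.1 * v x
        ≤ ∑ i : Fin n, ∑ x ∈ topk (aminus i) k \ topk a k, α x.1 * v x :=
  replacement_bids_cover_displaced_bids_general n m K v hv α hα a ha aopt hsort htie aminus hmin1
    hmin2

end
end SponsoredShopping
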